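/- For t < 1/2 set U(t) = 1 − √(1−2t), and define real functions E_g on (−∞, 1/2) for g ≥ 1 by E_1(t) = t·U(t)^2/(2·(1−U(t))^3) and, for g ≥ 2, E_g(t) = (1/(2(1−U(t))))·[ Σ_{ℓ=1}^{g−1} E_ℓ(t)·E_{g−ℓ}(t) + t·Σ over all tuples (k_1,…,k_{g−1}) ∈ ℕ^{g−1} with k_1+2k_2+…+(g−1)k_{g−1} = g−1 of ((k_1+…+k_{g−1})!/(k_1!⋯k_{g−1}!))·(2U(t) + (k_1+…+k_{g−1}) − 1)/(1−U(t))^{(k_1+…+k_{g−1})+2}·Π_{ℓ=1}^{g−1} E_ℓ(t)^{k_ℓ} ]. (E_g is the exponential generating function of leaf-labeled simplex time-consistent galled trees with g galls.) Then for every g ≥ 1, the limit as t → 1/2 from the left of (1−2t)^{2g−1/2}·E_g(t) exists and equals (4g−3)!!/((2g)!·2^g), where (4g−3)!! denotes the double factorial of 4g−3. -/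

import Mathlib

/-!
Put `s = √(1 - 2t)`, so that `U = 1 - s` and `t = (1 - s²)/2`. The normalized functions
`F_g = s^(4g-1) E_g` satisfy a recursion whose right-hand side is a polynomial in `s`, `t` and the
`F_ℓ` with `ℓ < g`; by strong induction every `F_g` therefore has a limit `L_g` as `t → 1/2⁻`, and
the `L_g` obey the same recursion at `s = 0`, `t = 1/2`.

The numbers `L_g = 2 C_{2g-1} / 8^g` (Catalan numbers `C_n`) solve that recursion. With the bisected
Catalan series `E(x) = ∑ C_{2n} xⁿ` and `H(x) = ∑ C_{2n+1} xⁿ`, the Catalan recursion splits into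
`E = 1 + 2xHE` and `H = E² + xH²`. Hence `E² = (1 - 2xH)⁻² = ∑ (K+1) (2xH)^K`, which the multinomial
theorem expands over the weighted tuples, and `E²(x) = C(4x) = ∑ 4ⁿ Cₙ xⁿ` because both sides solve
`Y = 1 + 4xY²`. The coefficient of `x^(g-1)` in `H = E² + xH²` is then exactly the recursion for
`L_g`. Finally `2 C_{2g-1} / 8^g = (4g-3)!! / ((2g)! 2^g)`.
-/

open Finset

/-- `U(t) = 1 − √(1−2t)`, the EGF of leaf-labeled rooted binary trees. -/
noncomputable def U16 : ℝ → ℝ := fun t => 1 - Real.sqrt (1 - 2 * t)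

/-- The set of tuples `(k_1, …, k_{g-1}) ∈ ℕ^{g-1}` with `k_1 + 2k_2 + … + (g-1)k_{g-1} = g-1`,
represented as functions `Fin (g-1) → ℕ` (index `i` corresponds to `k_{i+1}`).  Every such tuple
has `k_ℓ ≤ g-1 < g`, so filtering inside `Finset.range g` captures all solutions. -/
def weightedTuples (g : ℕ) : Finset (Fin (g - 1) → ℕ) :=
  (Fintype.piFinset fun _ => Finset.range g).filter fun k =>
    ∑ i, (i.1 + 1) * k i = g - 1

open PowerSeries Filter Topology

theorem Finset.prod_pow_mul_pow {ι M : Type*} [CommMonoid M] (s : Finset ι) (x : M)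
    (a k : ι → ℕ) (f : ι → M) :
    ∏ i ∈ s, (x ^ a i * f i) ^ k i = x ^ (∑ i ∈ s, a i * k i) * ∏ i ∈ s, f i ^ k i := by
  simp only [mul_pow, ← pow_mul, prod_mul_distrib, prod_pow_eq_pow_sum]

theorem Finset.sum_range_two_mul {M : Type*} [AddCommMonoid M] (f : ℕ → M) (n : ℕ) :
    ∑ i ∈ range (2 * n), f i = ∑ a ∈ range n, f (2 * a) + ∑ a ∈ range n, f (2 * a + 1) := by
  induction n with
  | zero => simp
  | succ n ih =>
    rw [show 2 * (n + 1) = 2 * n + 1 + 1 by ring, sum_range_succ, sum_range_succ, ih,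
      sum_range_succ, sum_range_succ, add_add_add_comm, add_assoc]

theorem sq_one_sub_mul_sum_range_succ_smul_pow {R : Type*} [CommRing R] (z : R) (n : ℕ) :
    (1 - z) ^ 2 * ∑ K ∈ range n, (K + 1) • z ^ K = 1 - (n + 1) • z ^ n + n • z ^ (n + 1) := by
  induction n with
  | zero => simp
  | succ n ih =>
    rw [sum_range_succ, mul_add, ih]
    simp only [nsmul_eq_mul]
    push_cast
    ring

namespace PowerSeries

variable {R : Type*}

theorem coeff_mk_mul_mk [CommSemiring R] (f g : ℕ → R) (n : ℕ) :
    coeff n (mk f * mk g) = ∑ i ∈ range (n + 1), f i * g (n - i) := by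
  rw [coeff_mul,
    Nat.sum_antidiagonal_eq_sum_range_succ (fun i j => coeff i (mk f) * coeff j (mk g))]
  simp only [coeff_mk]

theorem coeff_pow_eq_of_coeff_eq [CommSemiring R] {φ ψ : R⟦X⟧} {n : ℕ}
    (h : ∀ j ≤ n, coeff j φ = coeff j ψ) (K : ℕ) : coeff n (φ ^ K) = coeff n (ψ ^ K) := by
  have htrunc : trunc (n + 1) φ = trunc (n + 1) ψ := by
    ext j
    simp only [coeff_trunc]
    split_ifs with hj
    exacts [h j (by omega), rfl]
  rw [← coeff_coe_trunc_of_lt n.lt_succ_self, ← trunc_trunc_pow, htrunc, trunc_trunc_pow,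
    coeff_coe_trunc_of_lt n.lt_succ_self]

theorem coeff_X_mul_mk_pow [CommSemiring R] (a : ℕ → R) (n K : ℕ) :
    coeff n ((X * mk a) ^ K)
      = ∑ k ∈ (piAntidiag (univ : Finset (Fin n)) K).filter
            (fun k : Fin n → ℕ => ∑ i, (i.1 + 1) * k i = n),
          (Nat.multinomial univ k : R) * ∏ i, a i.1 ^ k i := by
  have htrunc :
      ∀ j ≤ n, coeff j (X * mk a) = coeff j (∑ i : Fin n, C (a i.1) * X ^ (i.1 + 1)) := by
    intro j hj
    simp only [map_sum, coeff_C_mul_X_pow]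
    cases j with
    | zero => simp
    | succ j =>
      rw [coeff_succ_X_mul, coeff_mk, sum_eq_single_of_mem (⟨j, by omega⟩ : Fin n) (mem_univ _)]
      · simp
      · intro i _ hi
        exact if_neg fun h => hi (Fin.ext (by simp only at h ⊢; omega))
  rw [coeff_pow_eq_of_coeff_eq htrunc, sum_pow_eq_sum_piAntidiag, map_sum, sum_filter]
  refine sum_congr rfl fun k _ => ?_
  simp only [mul_comm (C _), prod_pow_mul_pow, ← map_pow, ← map_prod]
  rw [← map_natCast (C (R := R)), mul_left_comm, mul_comm, ← map_mul, coeff_C_mul_X_pow]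
  exact if_congr eq_comm rfl rfl

theorem eq_of_eq_one_add_X_mul_mul_sq [CommSemiring R] {c φ ψ : R⟦X⟧}
    (hφ : φ = 1 + X * (c * φ ^ 2)) (hψ : ψ = 1 + X * (c * ψ ^ 2)) : φ = ψ := by
  ext n
  induction n using Nat.strong_induction_on with
  | _ n ih =>
    rw [hφ, hψ]
    cases n with
    | zero => simp
    | succ m =>
      rw [map_add, map_add, coeff_succ_X_mul, coeff_succ_X_mul, coeff_mul, coeff_mul]
      congr 1
      refine sum_congr rfl fun p hp => ?_
      have hp2 := mem_antidiagonal.mp hp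
      rw [coeff_pow_eq_of_coeff_eq fun j hj => ih j (by omega)]

theorem coeff_sq_eq_sum_of_one_sub_X_mul_mul_eq_one [CommRing R] {h e : R⟦X⟧}
    (he : (1 - X * h) * e = 1) (M : ℕ) :
    coeff M (e ^ 2) = ∑ K ∈ range (M + 1), (K + 1) • coeff M ((X * h) ^ K) := by
  have hS : ∑ K ∈ range (M + 1), (K + 1) • (X * h) ^ K
      = e ^ 2 - X ^ (M + 1) * (e ^ 2 * h ^ (M + 1) * ((M + 2) • 1 - (M + 1) • (X * h))) := by
    have hgeom := sq_one_sub_mul_sum_range_succ_smul_pow (X * h) (M + 1)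
    simp only [nsmul_eq_mul] at hgeom ⊢
    linear_combination e ^ 2 * hgeom
      - (∑ K ∈ range (M + 1), ((K + 1 : ℕ) : R⟦X⟧) * (X * h) ^ K) * ((1 - X * h) * e + 1) * he
  have hcoeff := congrArg (coeff M) hS
  rw [map_sub, coeff_X_pow_mul', if_neg (by omega), sub_zero] at hcoeff
  rw [← hcoeff, map_sum]
  simp only [map_nsmul]

end PowerSeries

theorem catalan_eq_sum_range (n : ℕ) :
    catalan (n + 1) = ∑ i ∈ range (n + 1), catalan i * catalan (n - i) := by
  rw [catalan_succ']
  exact Nat.sum_antidiagonal_eq_sum_range_succ (fun i j => catalan i * catalan j) n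

theorem catalan_two_mul_add_two (n : ℕ) :
    catalan (2 * n + 2)
      = 2 * ∑ a ∈ range (n + 1), catalan (2 * a + 1) * catalan (2 * (n - a)) := by
  rw [catalan_eq_sum_range, show 2 * n + 1 + 1 = 2 * (n + 1) by ring, sum_range_two_mul,
    two_mul (∑ a ∈ range (n + 1), catalan (2 * a + 1) * catalan (2 * (n - a)))]
  congr 1
  · rw [← sum_range_reflect]
    refine sum_congr rfl fun a ha => ?_
    have := mem_range.mp ha
    rw [mul_comm, show 2 * n + 1 - 2 * (n + 1 - 1 - a) = 2 * a + 1 by omega,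
      show n + 1 - 1 - a = n - a by omega]
  · refine sum_congr rfl fun a ha => ?_
    have := mem_range.mp ha
    rw [show 2 * n + 1 - (2 * a + 1) = 2 * (n - a) by omega]

theorem catalan_two_mul_add_three (n : ℕ) :
    catalan (2 * n + 3) = ∑ a ∈ range (n + 2), catalan (2 * a) * catalan (2 * (n + 1 - a))
      + ∑ a ∈ range (n + 1), catalan (2 * a + 1) * catalan (2 * (n - a) + 1) := by
  rw [catalan_eq_sum_range, show 2 * n + 2 + 1 = 2 * (n + 1) + 1 by ring, sum_range_succ,
    sum_range_two_mul, sum_range_succ _ (n + 1), add_right_comm]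
  congr 1
  · congr 1
    · refine sum_congr rfl fun a ha => ?_
      have := mem_range.mp ha
      rw [show 2 * n + 2 - 2 * a = 2 * (n + 1 - a) by omega]
    · rw [show 2 * n + 2 - 2 * (n + 1) = 2 * (n + 1 - (n + 1)) by omega]
  · refine sum_congr rfl fun a ha => ?_
    have := mem_range.mp ha
    rw [show 2 * n + 2 - (2 * a + 1) = 2 * (n - a) + 1 by omega]

namespace PowerSeries

noncomputable def evenCatalanSeries : ℝ⟦X⟧ := mk fun n => (catalan (2 * n) : ℝ)

noncomputable def oddCatalanSeries : ℝ⟦X⟧ := mk fun n => (catalan (2 * n + 1) : ℝ)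

theorem one_sub_X_mul_two_mul_oddCatalanSeries_mul_evenCatalanSeries :
    (1 - X * (2 * oddCatalanSeries)) * evenCatalanSeries = 1 := by
  suffices evenCatalanSeries = 1 + X * (2 * oddCatalanSeries * evenCatalanSeries) by
    linear_combination this
  ext n
  cases n with
  | zero => simp [evenCatalanSeries]
  | succ n =>
    rw [map_add, coeff_succ_X_mul, coeff_one, if_neg n.succ_ne_zero, zero_add, mul_assoc,
      ← map_ofNat C 2, coeff_C_mul, evenCatalanSeries, oddCatalanSeries, coeff_mk_mul_mk,
      coeff_mk, show 2 * (n + 1) = 2 * n + 2 by ring, catalan_two_mul_add_two]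
    push_cast
    rfl

theorem oddCatalanSeries_eq :
    oddCatalanSeries = evenCatalanSeries ^ 2 + X * oddCatalanSeries ^ 2 := by
  ext n
  rw [map_add, sq, sq]
  cases n with
  | zero => simp [evenCatalanSeries, oddCatalanSeries, coeff_mk_mul_mk]
  | succ n =>
    rw [coeff_succ_X_mul, evenCatalanSeries, oddCatalanSeries, coeff_mk_mul_mk, coeff_mk_mul_mk,
      coeff_mk, show 2 * (n + 1) + 1 = 2 * n + 3 by ring, catalan_two_mul_add_three]
    push_cast
    rfl

theorem evenCatalanSeries_sq :
    evenCatalanSeries ^ 2 = rescale 4 (catalanSeries.map (Nat.castRingHom ℝ)) := by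
  have hcat := congrArg (fun φ => rescale (4 : ℝ) (φ.map (Nat.castRingHom ℝ)))
    catalanSeries_sq_mul_X_add_one
  simp only [map_add, map_mul, map_pow, map_X, rescale_X, map_one, map_ofNat C 4] at hcat
  refine eq_of_eq_one_add_X_mul_mul_sq (c := 4) ?_ (by linear_combination -hcat)
  linear_combination
    ((1 - X * (2 * oddCatalanSeries)) * evenCatalanSeries + 1)
      * one_sub_X_mul_two_mul_oddCatalanSeries_mul_evenCatalanSeries
    + 4 * X * evenCatalanSeries ^ 2 * oddCatalanSeries_eq

theorem coeff_evenCatalanSeries_sq (n : ℕ) :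
    coeff n (evenCatalanSeries ^ 2) = (4 ^ n * catalan n : ℝ) := by
  rw [evenCatalanSeries_sq, coeff_rescale, coeff_map, catalanSeries_coeff, eq_natCast]

theorem two_mul_oddCatalanSeries :
    2 * oddCatalanSeries = mk fun n => 2 * (catalan (2 * n + 1) : ℝ) := by
  ext n
  rw [← map_ofNat C 2, coeff_C_mul, oddCatalanSeries, coeff_mk, coeff_mk]

end PowerSeries

theorem sum_weightedTuples_eq_sum_range {M : Type*} [AddCommMonoid M] {g : ℕ} (hg : 1 ≤ g)
    (f : (Fin (g - 1) → ℕ) → M) :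
    ∑ k ∈ weightedTuples g, f k = ∑ K ∈ range g, ∑ k ∈ (piAntidiag univ K).filter
      (fun k : Fin (g - 1) → ℕ => ∑ i, (i.1 + 1) * k i = g - 1), f k := by
  have hle : ∀ k : Fin (g - 1) → ℕ, ∀ i, k i ≤ ∑ j, (j.1 + 1) * k j := fun k i =>
    (Nat.le_mul_of_pos_left _ i.1.succ_pos).trans
      (single_le_sum (f := fun j : Fin (g - 1) => (j.1 + 1) * k j) (by simp) (mem_univ i))
  have hmaps : ∀ k ∈ weightedTuples g, ∑ i, k i ∈ range g := by
    intro k hk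
    have hw := (mem_filter.mp hk).2
    have : ∑ i, k i ≤ ∑ i, (i.1 + 1) * k i :=
      sum_le_sum fun i _ => Nat.le_mul_of_pos_left _ i.1.succ_pos
    exact mem_range.mpr (by omega)
  rw [← sum_fiberwise_of_maps_to hmaps]
  refine sum_congr rfl fun K _ => sum_congr ?_ fun _ _ => rfl
  ext k
  simp only [weightedTuples, mem_filter, Fintype.mem_piFinset, mem_range, mem_piAntidiag,
    mem_univ, implies_true, and_true]
  constructor
  · rintro ⟨⟨_, hw⟩, hK⟩
    exact ⟨hK, hw⟩
  · rintro ⟨hK, hw⟩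
    exact ⟨⟨fun i => by have := hle k i; omega, hw⟩, hK⟩

theorem catalan_two_mul_sub_one_eq {g : ℕ} (hg : 1 ≤ g) :
    (catalan (2 * g - 1) : ℝ)
      = ∑ ℓ ∈ Ico 1 g, (catalan (2 * ℓ - 1) : ℝ) * catalan (2 * (g - ℓ) - 1)
        + ∑ k ∈ weightedTuples g, (Nat.multinomial univ k : ℝ) * (((∑ i, k i : ℕ) : ℝ) + 1)
            * ∏ i, (2 * (catalan (2 * i.1 + 1) : ℝ)) ^ k i := by
  have hodd := congrArg (coeff (g - 1)) oddCatalanSeries_eq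
  rw [map_add] at hodd
  have hH : coeff (g - 1) oddCatalanSeries = catalan (2 * g - 1) := by
    rw [oddCatalanSeries, coeff_mk, show 2 * (g - 1) + 1 = 2 * g - 1 by omega]
  have hXH : coeff (g - 1) (X * oddCatalanSeries ^ 2)
      = ∑ ℓ ∈ Ico 1 g, (catalan (2 * ℓ - 1) : ℝ) * catalan (2 * (g - ℓ) - 1) := by
    obtain ⟨m, rfl⟩ : ∃ m, g = m + 1 := ⟨g - 1, by omega⟩
    rw [Nat.add_sub_cancel]
    cases m with
    | zero => simp
    | succ m =>
      rw [coeff_succ_X_mul, sq, oddCatalanSeries, coeff_mk_mul_mk, sum_Ico_eq_sum_range,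
        show m + 1 + 1 - 1 = m + 1 by omega]
      refine sum_congr rfl fun a ha => ?_
      have := mem_range.mp ha
      rw [show 2 * (1 + a) - 1 = 2 * a + 1 by omega,
        show 2 * (m + 1 + 1 - (1 + a)) - 1 = 2 * (m - a) + 1 by omega]
  have hE : coeff (g - 1) (evenCatalanSeries ^ 2)
      = ∑ k ∈ weightedTuples g, (Nat.multinomial univ k : ℝ) * (((∑ i, k i : ℕ) : ℝ) + 1)
            * ∏ i, (2 * (catalan (2 * i.1 + 1) : ℝ)) ^ k i := by
    rw [coeff_sq_eq_sum_of_one_sub_X_mul_mul_eq_one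
        one_sub_X_mul_two_mul_oddCatalanSeries_mul_evenCatalanSeries,
      sum_weightedTuples_eq_sum_range hg, Nat.sub_add_cancel hg, two_mul_oddCatalanSeries]
    refine sum_congr rfl fun K _ => ?_
    rw [coeff_X_mul_mk_pow, smul_sum]
    refine sum_congr rfl fun k hk => ?_
    rw [(mem_piAntidiag.mp (mem_filter.mp hk).1).1, nsmul_eq_mul]
    push_cast
    ring
  rw [← hH, hodd, hXH, hE, add_comm]

theorem catalan_mul_factorial_succ_mul_factorial (n : ℕ) :
    catalan n * (n + 1).factorial * n.factorial = (2 * n).factorial :=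
  calc catalan n * (n + 1).factorial * n.factorial
      = (n + 1) * catalan n * n.factorial * (2 * n - n).factorial := by
        rw [Nat.factorial_succ, show 2 * n - n = n by omega]; ring
    _ = (2 * n).choose n * n.factorial * (2 * n - n).factorial := by
        rw [succ_mul_catalan_eq_centralBinom, Nat.centralBinom_eq_two_mul_choose]
    _ = (2 * n).factorial := Nat.choose_mul_factorial_mul_factorial (by omega)

theorem catalan_two_mul_add_one_mul_factorial (m : ℕ) :
    catalan (2 * m + 1) * (2 * m + 2).factorial
      = (4 * m + 1).doubleFactorial * 2 ^ (2 * m + 1) := by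
  apply Nat.eq_of_mul_eq_mul_right (Nat.factorial_pos (2 * m + 1))
  rw [catalan_mul_factorial_succ_mul_factorial, show 2 * (2 * m + 1) = 4 * m + 1 + 1 by ring,
    Nat.factorial_eq_mul_doubleFactorial, show 4 * m + 1 + 1 = 2 * (2 * m + 1) by ring,
    Nat.doubleFactorial_two_mul]
  ring

noncomputable def gallStep (F : ℕ → ℝ) (g : ℕ) (s t : ℝ) : ℝ :=
  (∑ ℓ ∈ Ico 1 g, F ℓ * F (g - ℓ)
    + t * ∑ k ∈ weightedTuples g, (Nat.multinomial univ k : ℝ) * (1 - 2 * s + (∑ i, k i : ℕ))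
        * ∏ i : Fin (g - 1), F (i.1 + 1) ^ k i) / 2

theorem tendsto_gallStep {α : Type*} {l : Filter α} {F : α → ℕ → ℝ} {L : ℕ → ℝ} {s t : α → ℝ}
    {s₀ t₀ : ℝ} {g : ℕ} (hF : ∀ ℓ, 1 ≤ ℓ → ℓ < g → Tendsto (fun x => F x ℓ) l (𝓝 (L ℓ)))
    (hs : Tendsto s l (𝓝 s₀)) (ht : Tendsto t l (𝓝 t₀)) :
    Tendsto (fun x => gallStep (F x) g (s x) (t x)) l (𝓝 (gallStep L g s₀ t₀)) := by
  refine ((tendsto_finsetSum _ fun ℓ hℓ => ?_).add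
    (ht.mul (tendsto_finsetSum _ fun k _ => ?_))).div_const 2
  · have := mem_Ico.mp hℓ
    exact (hF ℓ this.1 this.2).mul (hF (g - ℓ) (by omega) (by omega))
  · refine (tendsto_const_nhds.mul ((tendsto_const_nhds.sub (hs.const_mul 2)).add
      tendsto_const_nhds)).mul (tendsto_finsetProd _ fun i _ => (hF _ (by omega) ?_).pow _)
    have := i.2
    omega

noncomputable def gallLimit (g : ℕ) : ℝ := 2 * catalan (2 * g - 1) / 8 ^ g

theorem gallLimit_eq_gallStep {g : ℕ} (hg : 2 ≤ g) :
    gallLimit g = gallStep gallLimit g 0 (1 / 2) := by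
  have hpair : ∀ ℓ ∈ Ico 1 g, gallLimit ℓ * gallLimit (g - ℓ)
      = 4 / 8 ^ g * ((catalan (2 * ℓ - 1) : ℝ) * catalan (2 * (g - ℓ) - 1)) := by
    intro ℓ hℓ
    rw [gallLimit, gallLimit, ← Nat.add_sub_cancel' (mem_Ico.mp hℓ).2.le, pow_add,
      Nat.add_sub_cancel_left]
    field_simp
    ring
  have htuple : ∑ k ∈ weightedTuples g, (Nat.multinomial univ k : ℝ)
        * (1 - 2 * 0 + (∑ i, k i : ℕ)) * ∏ i : Fin (g - 1), gallLimit (i.1 + 1) ^ k i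
      = (∑ k ∈ weightedTuples g, (Nat.multinomial univ k : ℝ)
        * (((∑ i, k i : ℕ) : ℝ) + 1) * ∏ i, (2 * (catalan (2 * i.1 + 1) : ℝ)) ^ k i)
        / 8 ^ (g - 1) := by
    rw [sum_div]
    refine sum_congr rfl fun k hk => ?_
    have hlimit : ∀ i : Fin (g - 1),
        gallLimit (i.1 + 1) = 8⁻¹ ^ (i.1 + 1) * (2 * catalan (2 * i.1 + 1)) := by
      intro i
      rw [gallLimit, show 2 * (i.1 + 1) - 1 = 2 * i.1 + 1 by omega, inv_pow]
      ring
    rw [prod_congr rfl fun i _ => by rw [hlimit i], prod_pow_mul_pow, (mem_filter.mp hk).2,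
      inv_pow]
    field_simp
    ring
  have h8 : (8 : ℝ) ^ g = 8 * 8 ^ (g - 1) := by rw [← _root_.pow_succ']; congr; omega
  rw [gallStep, sum_congr rfl hpair, ← mul_sum, htuple, gallLimit,
    catalan_two_mul_sub_one_eq (by omega), h8]
  field_simp
  ring

theorem gallLimit_eq_doubleFactorial {g : ℕ} (hg : 1 ≤ g) :
    gallLimit g = ((4 * g - 3).doubleFactorial : ℝ) / ((2 * g).factorial * 2 ^ g) := by
  obtain ⟨m, rfl⟩ : ∃ m, g = m + 1 := ⟨g - 1, by omega⟩
  have hcat : (catalan (2 * m + 1) : ℝ) * (2 * m + 2).factorial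
      = (4 * m + 1).doubleFactorial * 2 ^ (2 * m + 1) := by
    exact_mod_cast catalan_two_mul_add_one_mul_factorial m
  have h8 : (8 : ℝ) ^ (m + 1) = 2 * 2 ^ (2 * m + 1) * 2 ^ (m + 1) := by
    rw [show (8 : ℝ) = 2 ^ 3 by norm_num, ← pow_mul]
    ring
  rw [gallLimit, div_eq_div_iff (by positivity) (by positivity),
    show 2 * (m + 1) - 1 = 2 * m + 1 by omega, show 4 * (m + 1) - 3 = 4 * m + 1 by omega,
    show 2 * (m + 1) = 2 * m + 2 by ring, h8]
  linear_combination 2 * 2 ^ (m + 1) * hcat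

def GallRecursion (E : ℕ → ℝ → ℝ) : Prop :=
  ∀ g, 2 ≤ g → ∀ t : ℝ, t < 1 / 2 →
    E g t = (1 / (2 * (1 - U16 t))) *
      ((∑ ℓ ∈ Finset.Ico 1 g, E ℓ t * E (g - ℓ) t)
       + t * ∑ k ∈ weightedTuples g,
           (Nat.multinomial Finset.univ k : ℝ) *
             ((2 * U16 t + ((∑ i, k i : ℕ) : ℝ) - 1) / (1 - U16 t) ^ ((∑ i, k i) + 2)) *
             ∏ ℓ : Fin (g - 1), E (ℓ.1 + 1) t ^ k ℓ)

theorem four_mul_sub_two_eq_of_mem_weightedTuples {g : ℕ} (hg : 1 ≤ g) {k : Fin (g - 1) → ℕ}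
    (hk : k ∈ weightedTuples g) : 4 * g - 2 = (∑ i, k i + 2) + ∑ i, (4 * i.1 + 3) * k i := by
  have h : ∑ i : Fin (g - 1), ((4 * i.1 + 3) * k i + k i) = 4 * ∑ i, (i.1 + 1) * k i := by
    rw [mul_sum]
    exact sum_congr rfl fun i _ => by ring
  rw [sum_add_distrib, (mem_filter.mp hk).2] at h
  omega

noncomputable def normalizedEGF (E : ℕ → ℝ → ℝ) (g : ℕ) (t : ℝ) : ℝ :=
  √(1 - 2 * t) ^ (4 * g - 1) * E g t

section

variable {E : ℕ → ℝ → ℝ} {t : ℝ}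

theorem normalizedEGF_one (hE1 : ∀ t : ℝ, t < 1 / 2 →
      E 1 t = t * U16 t ^ 2 / (2 * (1 - U16 t) ^ 3)) (ht : t < 1 / 2) :
    normalizedEGF E 1 t = t * (1 - √(1 - 2 * t)) ^ 2 / 2 := by
  have hs : 0 < √(1 - 2 * t) := Real.sqrt_pos.mpr (by linarith)
  rw [normalizedEGF, hE1 t ht, U16, sub_sub_cancel]
  field_simp

theorem normalizedEGF_eq_gallStep (hrec : GallRecursion E) {g : ℕ} (hg : 2 ≤ g)
    (ht : t < 1 / 2) :
    normalizedEGF E g t = gallStep (fun ℓ => normalizedEGF E ℓ t) g √(1 - 2 * t) t := by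
  rw [normalizedEGF, hrec g hg t ht, gallStep]
  set s := √(1 - 2 * t)
  have hs : 0 < s := Real.sqrt_pos.mpr (by linarith)
  have hU : U16 t = 1 - s := rfl
  have hpair : ∑ ℓ ∈ Ico 1 g, normalizedEGF E ℓ t * normalizedEGF E (g - ℓ) t
      = s ^ (4 * g - 2) * ∑ ℓ ∈ Ico 1 g, E ℓ t * E (g - ℓ) t := by
    rw [mul_sum]
    refine sum_congr rfl fun ℓ hℓ => ?_
    have := mem_Ico.mp hℓ
    rw [normalizedEGF, normalizedEGF, show 4 * g - 2 = (4 * ℓ - 1) + (4 * (g - ℓ) - 1) by omega,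
      pow_add]
    ring
  have htuple : ∑ k ∈ weightedTuples g, (Nat.multinomial univ k : ℝ)
        * (1 - 2 * s + (∑ i, k i : ℕ)) * ∏ i : Fin (g - 1), normalizedEGF E (i.1 + 1) t ^ k i
      = s ^ (4 * g - 2) * ∑ k ∈ weightedTuples g, (Nat.multinomial univ k : ℝ)
        * ((2 * U16 t + ((∑ i, k i : ℕ) : ℝ) - 1) / (1 - U16 t) ^ ((∑ i, k i) + 2))
        * ∏ i : Fin (g - 1), E (i.1 + 1) t ^ k i := by
    rw [mul_sum]
    refine sum_congr rfl fun k hk => ?_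
    have hprod : ∏ i : Fin (g - 1), normalizedEGF E (i.1 + 1) t ^ k i
        = s ^ (∑ i, (4 * i.1 + 3) * k i) * ∏ i : Fin (g - 1), E (i.1 + 1) t ^ k i := by
      rw [← prod_pow_mul_pow]
      refine prod_congr rfl fun i _ => ?_
      rw [normalizedEGF, show 4 * (i.1 + 1) - 1 = 4 * i.1 + 3 by omega]
    rw [hprod, four_mul_sub_two_eq_of_mem_weightedTuples (by omega) hk, pow_add, hU,
      sub_sub_cancel]
    field_simp
    ring
  rw [hpair, htuple, hU, sub_sub_cancel, show 4 * g - 1 = (4 * g - 2) + 1 by omega, pow_succ]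
  field_simp

theorem tendsto_normalizedEGF (hE1 : ∀ t : ℝ, t < 1 / 2 →
      E 1 t = t * U16 t ^ 2 / (2 * (1 - U16 t) ^ 3)) (hrec : GallRecursion E) :
    ∀ g, 1 ≤ g → Tendsto (normalizedEGF E g) (𝓝[<] (1 / 2)) (𝓝 (gallLimit g)) := by
  have hs : Tendsto (fun t : ℝ => √(1 - 2 * t)) (𝓝[<] (1 / 2)) (𝓝 0) := by
    have hcont : Continuous fun t : ℝ => √(1 - 2 * t) := by fun_prop
    simpa using (hcont.tendsto (1 / 2)).mono_left nhdsWithin_le_nhds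
  have ht : Tendsto (fun t : ℝ => t) (𝓝[<] (1 / 2)) (𝓝 (1 / 2)) :=
    tendsto_nhdsWithin_of_tendsto_nhds tendsto_id
  intro g
  induction g using Nat.strong_induction_on with
  | _ g ih =>
    intro hg
    rcases hg.eq_or_lt with rfl | hg2
    · have hlim : gallLimit 1 = 1 / 2 * (1 - 0) ^ 2 / 2 := by norm_num [gallLimit]
      rw [hlim]
      refine ((ht.mul ((tendsto_const_nhds.sub hs).pow 2)).div_const 2).congr' ?_
      filter_upwards [self_mem_nhdsWithin] with t ht
      exact (normalizedEGF_one hE1 ht).symm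
    · rw [gallLimit_eq_gallStep hg2]
      refine (tendsto_gallStep (fun ℓ h1 h2 => ih ℓ h2 h1) hs ht).congr' ?_
      filter_upwards [self_mem_nhdsWithin] with t ht
      exact (normalizedEGF_eq_gallStep hrec hg2 ht).symm

end

/-- If `E g` is the exponential generating function of leaf-labeled simplex time-consistent
galled trees with `g` galls, given on `t < 1/2` by `E 1 t = t·U(t)²/(2(1−U(t))³)` and the
stated recursion for `g ≥ 2`, then for every `g ≥ 1`,
`(1−2t)^{2g−1/2}·E g t → (4g−3)!!/((2g)!·2^g)` as `t → 1/2⁻`. -/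
theorem stmt16 (E : ℕ → ℝ → ℝ)
    (hE1 : ∀ t : ℝ, t < 1 / 2 →
      E 1 t = t * U16 t ^ 2 / (2 * (1 - U16 t) ^ 3))
    (hrec : ∀ g, 2 ≤ g → ∀ t : ℝ, t < 1 / 2 →
      E g t = (1 / (2 * (1 - U16 t))) *
        ((∑ ℓ ∈ Finset.Ico 1 g, E ℓ t * E (g - ℓ) t)
         + t * ∑ k ∈ weightedTuples g,
             (Nat.multinomial Finset.univ k : ℝ) *
               ((2 * U16 t + ((∑ i, k i : ℕ) : ℝ) - 1) / (1 - U16 t) ^ ((∑ i, k i) + 2)) *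
               ∏ ℓ : Fin (g - 1), E (ℓ.1 + 1) t ^ k ℓ)) :
    ∀ g : ℕ, 1 ≤ g →
      Filter.Tendsto (fun t : ℝ => (1 - 2 * t) ^ (2 * (g : ℝ) - 1 / 2) * E g t)
        (nhdsWithin (1 / 2) (Set.Iio (1 / 2)))
        (nhds ((Nat.doubleFactorial (4 * g - 3) : ℝ)
          / ((Nat.factorial (2 * g) : ℝ) * 2 ^ g))) := by
  intro g hg
  rw [← gallLimit_eq_doubleFactorial hg]
  refine (tendsto_normalizedEGF hE1 hrec g hg).congr' ?_
  filter_upwards [self_mem_nhdsWithin] with t ht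
  have hexp : 2 * (g : ℝ) - 1 / 2 = ((4 * g - 1 : ℕ) : ℝ) / 2 := by
    push_cast [Nat.cast_sub (show 1 ≤ 4 * g by omega)]
    ring
  rw [normalizedEGF, hexp, Real.rpow_div_two_eq_sqrt _ (by linarith [Set.mem_Iio.mp ht]),
    Real.rpow_natCast]
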